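/- arXiv:1004.4815 — 4 statements merged into one kernel-verified Lean document; each statement's English description precedes it below -/
import Mathlib

section
/- Fix a binary channel W0 with parameters (a0,b0) and uniform input, giving joint distribution μ0 and product measure μ0^p. For any joint distribution μ on {0,1}² with μ^p = μ0^p, the KL divergence satisfies D(μ ‖ μ0^p) ≥ D(μ0 ‖ μ0^p) whenever μ lies on the segment from μ0 moving away from μ0^p along the line {μ : μ^p = μ0^p}; in particular, the infimum of D(μ ‖ μ0^p) over {μ : μ^p = μ0^p, E_μ[log W1] ≥ E_{μ0}[log W1]} equals I(U,W0) when W0 and W1 both satisfy a+b>1 (or both satisfy a+b<1), where the minimizer is μ = μ0. -/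
open Finset Real

/-- The binary channel with parameters `(a,b)`: `ch a b x y = W(y|x)`,
with `W(0|0) = a`, `W(1|1) = b`. -/
noncomputable def ch (a b : ℝ) : Fin 2 → Fin 2 → ℝ := fun x y =>
  if x = 0 then (if y = 0 then a else 1 - a) else (if y = 0 then 1 - b else b)

/-- The joint distribution `μ(x,y) = (1/2) W(y|x)` of a uniform input through
the channel `(a,b)`. -/
noncomputable def jointU (a b : ℝ) : Fin 2 → Fin 2 → ℝ := fun x y => (1/2) * ch a b x y

/-- The product of the marginals of a joint distribution `μ` on `{0,1}²`. -/
noncomputable def pm (μ : Fin 2 → Fin 2 → ℝ) : Fin 2 → Fin 2 → ℝ :=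
  fun x y => (∑ v, μ x v) * (∑ u, μ u y)

/-- `μ` is a joint probability distribution on `{0,1}²`. -/
def IsDist (μ : Fin 2 → Fin 2 → ℝ) : Prop :=
  (∀ x y, 0 ≤ μ x y) ∧ ∑ x, ∑ y, μ x y = 1

/-- KL divergence `D(μ ‖ ν)` on `{0,1}²`, with the convention `0 · log 0 = 0`
(note `Real.log 0 = 0`). -/
noncomputable def kl (μ ν : Fin 2 → Fin 2 → ℝ) : ℝ :=
  ∑ x, ∑ y, μ x y * Real.log (μ x y / ν x y)

/-- `E_μ[log W] = ∑_{x,y} μ(x,y) log W(y|x)`. -/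
noncomputable def elog (μ W : Fin 2 → Fin 2 → ℝ) : ℝ :=
  ∑ x, ∑ y, μ x y * Real.log (W x y)

lemma mul_log_div_aux (u v : ℝ) (hu : 0 ≤ u) (hv : 0 < v) :
    u * Real.log (u / v) = u * Real.log u - u * Real.log v := by
  rcases eq_or_lt_of_le hu with h | h
  · simp [← h]
  · rw [Real.log_div (ne_of_gt h) (ne_of_gt hv)]; ring

lemma gibbs_term (u m : ℝ) (hu : 0 ≤ u) (hm : 0 < m) :
    u - m ≤ u * Real.log u - u * Real.log m := by
  rcases eq_or_lt_of_le hu with h | h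
  · simp [← h]; linarith
  · have h1 : Real.log (m / u) ≤ m / u - 1 := Real.log_le_sub_one_of_pos (by positivity)
    rw [Real.log_div (ne_of_gt hm) (ne_of_gt h)] at h1
    have h2 : u * (m / u) = m := by field_simp
    nlinarith [mul_le_mul_of_nonneg_left h1 (le_of_lt h)]

set_option maxHeartbeats 1000000 in
/-- If `W0` and `W1` lie on the same side of the line `a + b = 1`, then the
mismatched information `inf { D(μ ‖ μ0^p) : μ^p = μ0^p, E_μ[log W1] ≥ E_{μ0}[log W1] }`
equals `I(U, W0) = D(μ0 ‖ μ0^p)`, attained at the minimizer `μ = μ0`. -/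
theorem stmt_6 (a0 b0 a1 b1 : ℝ)
    (ha0 : a0 ∈ Set.Ioo (0:ℝ) 1) (hb0 : b0 ∈ Set.Ioo (0:ℝ) 1)
    (ha1 : a1 ∈ Set.Ioo (0:ℝ) 1) (hb1 : b1 ∈ Set.Ioo (0:ℝ) 1)
    (hside : (1 < a0 + b0 ∧ 1 < a1 + b1) ∨ (a0 + b0 < 1 ∧ a1 + b1 < 1)) :
    IsLeast
      {r : ℝ | ∃ μ : Fin 2 → Fin 2 → ℝ, IsDist μ ∧
        (∀ x y, pm μ x y = pm (jointU a0 b0) x y) ∧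
        elog (jointU a0 b0) (ch a1 b1) ≤ elog μ (ch a1 b1) ∧
        r = kl μ (pm (jointU a0 b0))}
      (kl (jointU a0 b0) (pm (jointU a0 b0))) := by
  obtain ⟨ha0l, ha0r⟩ := ha0
  obtain ⟨hb0l, hb0r⟩ := hb0
  obtain ⟨ha1l, ha1r⟩ := ha1
  obtain ⟨hb1l, hb1r⟩ := hb1
  constructor
  · exact ⟨jointU a0 b0,
      ⟨by intro x y; fin_cases x <;> fin_cases y <;> simp [jointU, ch] <;> linarith,
       by simp [jointU, ch, Fin.sum_univ_two]; ring⟩,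
      fun x y => rfl, le_refl _, rfl⟩
  · rintro r ⟨μ, ⟨hpos, hsum⟩, hpm, helog, rfl⟩
    -- extract linear structure of μ
    have h00 := hpm 0 0
    have h10 := hpm 1 0
    simp [pm, jointU, ch, Fin.sum_univ_two] at h00 h10
    have hsum' : μ 0 0 + μ 0 1 + (μ 1 0 + μ 1 1) = 1 := by
      simpa [Fin.sum_univ_two] using hsum
    have hK : (0:ℝ) < 2⁻¹ * a0 + 2⁻¹ * (1 - b0) := by linarith
    have hC0 : μ 0 0 + μ 1 0 ≠ 0 := by
      intro h; rw [h, mul_zero] at h00; nlinarith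
    have hR0 : μ 0 0 + μ 0 1 = 1/2 := by
      have : (μ 0 0 + μ 0 1) * (μ 0 0 + μ 1 0) = (μ 1 0 + μ 1 1) * (μ 0 0 + μ 1 0) := by
        rw [h00, h10]; ring_nf
      have h2 : (μ 0 0 + μ 0 1 - (μ 1 0 + μ 1 1)) * (μ 0 0 + μ 1 0) = 0 := by linarith [this]
      rcases mul_eq_zero.mp h2 with h3 | h3
      · linarith
      · exact absurd h3 hC0
    have hCol : μ 0 0 + μ 1 0 = (a0 + 1 - b0)/2 := by
      have : (1/2 : ℝ) * (μ 0 0 + μ 1 0) = (2⁻¹ * a0 + 2⁻¹ * (1 - a0)) * (2⁻¹ * a0 + 2⁻¹ * (1 - b0)) := by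
        rw [← h00, hR0]
      nlinarith [this]
    set s : ℝ := μ 0 0 - a0/2 with hs
    have hp00 : μ 0 0 = a0/2 + s := by rw [hs]; ring
    have hp01 : μ 0 1 = (1-a0)/2 - s := by rw [hs]; linarith
    have hp10 : μ 1 0 = (1-b0)/2 - s := by rw [hs]; linarith
    have hp11 : μ 1 1 = b0/2 + s := by rw [hs]; linarith
    -- constraint gives s * c1 ≥ 0
    have hc1 : 0 ≤ s * (Real.log a1 - Real.log (1-a1) - Real.log (1-b1) + Real.log b1) := by
      have h := helog
      simp [elog, jointU, ch, Fin.sum_univ_two] at h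
      rw [hp00, hp01, hp10, hp11] at h
      ring_nf at h ⊢
      linarith
    -- c0 and c1 have the same sign
    have hsc0 : 0 ≤ s * (Real.log a0 - Real.log (1-a0) - Real.log (1-b0) + Real.log b0) := by
      rcases hside with ⟨h0, h1⟩ | ⟨h0, h1⟩
      · have hc1pos : 0 < Real.log a1 - Real.log (1-a1) - Real.log (1-b1) + Real.log b1 := by
          have : Real.log ((1-a1)*(1-b1)) < Real.log (a1*b1) :=
            Real.log_lt_log (by nlinarith) (by nlinarith)
          rw [Real.log_mul (by linarith) (by linarith), Real.log_mul (by linarith) (by linarith)] at this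
          linarith
        have hspos : 0 ≤ s := by
          by_contra hneg
          push_neg at hneg
          nlinarith [mul_neg_of_neg_of_pos hneg hc1pos]
        have hc0pos : 0 < Real.log a0 - Real.log (1-a0) - Real.log (1-b0) + Real.log b0 := by
          have : Real.log ((1-a0)*(1-b0)) < Real.log (a0*b0) :=
            Real.log_lt_log (by nlinarith) (by nlinarith)
          rw [Real.log_mul (by linarith) (by linarith), Real.log_mul (by linarith) (by linarith)] at this
          linarith
        positivity
      · have hc1neg : Real.log a1 - Real.log (1-a1) - Real.log (1-b1) + Real.log b1 < 0 := by
          have : Real.log (a1*b1) < Real.log ((1-a1)*(1-b1)) :=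
            Real.log_lt_log (by nlinarith) (by nlinarith)
          rw [Real.log_mul (by linarith) (by linarith), Real.log_mul (by linarith) (by linarith)] at this
          linarith
        have hsneg : s ≤ 0 := by nlinarith
        have hc0neg : Real.log a0 - Real.log (1-a0) - Real.log (1-b0) + Real.log b0 < 0 := by
          have : Real.log (a0*b0) < Real.log ((1-a0)*(1-b0)) :=
            Real.log_lt_log (by nlinarith) (by nlinarith)
          rw [Real.log_mul (by linarith) (by linarith), Real.log_mul (by linarith) (by linarith)] at this
          linarith
        nlinarith
    -- ν values
    have hA : (0:ℝ) < (a0 + 1 - b0)/4 := by linarith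
    have hB : (0:ℝ) < (1 - a0 + b0)/4 := by linarith
    have hν00 : pm (jointU a0 b0) 0 0 = (a0 + 1 - b0)/4 := by
      simp [pm, jointU, ch, Fin.sum_univ_two]; ring
    have hν10 : pm (jointU a0 b0) 1 0 = (a0 + 1 - b0)/4 := by
      simp [pm, jointU, ch, Fin.sum_univ_two]; ring
    have hν01 : pm (jointU a0 b0) 0 1 = (1 - a0 + b0)/4 := by
      simp [pm, jointU, ch, Fin.sum_univ_two]; ring
    have hν11 : pm (jointU a0 b0) 1 1 = (1 - a0 + b0)/4 := by
      simp [pm, jointU, ch, Fin.sum_univ_two]; ring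
    -- m values positive
    have hm00 : (0:ℝ) < a0/2 := by linarith
    have hm01 : (0:ℝ) < (1-a0)/2 := by linarith
    have hm10 : (0:ℝ) < (1-b0)/2 := by linarith
    have hm11 : (0:ℝ) < b0/2 := by linarith
    -- Gibbs: ∑ p log p ≥ ∑ p log m
    have g00 := gibbs_term (μ 0 0) (a0/2) (hpos 0 0) hm00
    have g01 := gibbs_term (μ 0 1) ((1-a0)/2) (hpos 0 1) hm01
    have g10 := gibbs_term (μ 1 0) ((1-b0)/2) (hpos 1 0) hm10
    have g11 := gibbs_term (μ 1 1) (b0/2) (hpos 1 1) hm11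
    -- expand kl on both sides
    simp only [kl, Fin.sum_univ_two]
    rw [hν00, hν01, hν10, hν11]
    rw [mul_log_div_aux _ _ (hpos 0 0) hA, mul_log_div_aux _ _ (hpos 0 1) hB,
        mul_log_div_aux _ _ (hpos 1 0) hA, mul_log_div_aux _ _ (hpos 1 1) hB]
    have hj00 : jointU a0 b0 0 0 = a0/2 := by simp [jointU, ch]; ring
    have hj01 : jointU a0 b0 0 1 = (1-a0)/2 := by simp [jointU, ch]; ring
    have hj10 : jointU a0 b0 1 0 = (1-b0)/2 := by simp [jointU, ch]; ring
    have hj11 : jointU a0 b0 1 1 = b0/2 := by simp [jointU, ch]; ring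
    rw [hj00, hj01, hj10, hj11]
    rw [mul_log_div_aux _ _ (le_of_lt hm00) hA, mul_log_div_aux _ _ (le_of_lt hm01) hB,
        mul_log_div_aux _ _ (le_of_lt hm10) hA, mul_log_div_aux _ _ (le_of_lt hm11) hB]
    -- now everything in terms of logs; rewrite log of halves
    have l00 : Real.log (a0/2) = Real.log a0 - Real.log 2 :=
      Real.log_div (ne_of_gt ha0l) two_ne_zero
    have l01 : Real.log ((1-a0)/2) = Real.log (1-a0) - Real.log 2 :=
      Real.log_div (by linarith) two_ne_zero
    have l10 : Real.log ((1-b0)/2) = Real.log (1-b0) - Real.log 2 :=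
      Real.log_div (by linarith) two_ne_zero
    have l11 : Real.log (b0/2) = Real.log b0 - Real.log 2 :=
      Real.log_div (ne_of_gt hb0l) two_ne_zero
    simp only [hp00, hp01, hp10, hp11] at g00 g01 g10 g11 ⊢
    simp only [l00, l01, l10, l11] at g00 g01 g10 g11 ⊢
    ring_nf at g00 g01 g10 g11 hsc0 ⊢
    linarith
end

section
/- Fix a binary channel W0 with a0+b0 > 1 (non-flipping-like, with uniform input giving joint μ0) and a binary channel W1 with a1+b1 < 1 (flipping-like). Then the infimum over {μ : μ^p = μ0^p, E_μ[log W1] ≥ E_{μ0}[log W1]} of D(μ ‖ μ0^p) equals 0, i.e., the mismatched mutual information I_MIS(U, W0, log W1) is zero. -/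
open Finset Real

/-- Pointwise Gibbs inequality: `t - v ≤ t log(t/v)` for `t ≥ 0`, `v > 0`. -/
lemma gibbs_pt (t v : ℝ) (ht : 0 ≤ t) (hv : 0 < v) : t - v ≤ t * Real.log (t / v) := by
  rcases eq_or_lt_of_le ht with h | h
  · simp [← h]; linarith
  · have h1 : Real.log (v / t) ≤ v / t - 1 := Real.log_le_sub_one_of_pos (by positivity)
    have h2 : Real.log (v / t) = - Real.log (t / v) := by
      rw [← Real.log_inv]; congr 1; field_simp
    rw [h2] at h1
    have h3 : t * (v / t) = v := by field_simp
    nlinarith [mul_le_mul_of_nonneg_left h1 ht]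

lemma nu_pos (a0 b0 : ℝ) (ha0 : a0 ∈ Set.Ioo (0:ℝ) 1) (hb0 : b0 ∈ Set.Ioo (0:ℝ) 1)
    (x y : Fin 2) : 0 < pm (jointU a0 b0) x y := by
  obtain ⟨h1, h2⟩ := ha0; obtain ⟨h3, h4⟩ := hb0
  fin_cases x <;> fin_cases y <;>
    simp [pm, jointU, ch, Fin.sum_univ_two] <;> nlinarith

lemma nu_sum (a0 b0 : ℝ) : ∑ x, ∑ y, pm (jointU a0 b0) x y = 1 := by
  simp [pm, jointU, ch, Fin.sum_univ_two]; ring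

lemma nu_pm (a0 b0 : ℝ) (x y : Fin 2) :
    pm (pm (jointU a0 b0)) x y = pm (jointU a0 b0) x y := by
  fin_cases x <;> fin_cases y <;>
    simp [pm, jointU, ch, Fin.sum_univ_two] <;> ring

lemma elog_ineq (a0 b0 a1 b1 : ℝ)
    (ha1 : a1 ∈ Set.Ioo (0:ℝ) 1) (hb1 : b1 ∈ Set.Ioo (0:ℝ) 1)
    (h0 : 1 < a0 + b0) (h1 : a1 + b1 < 1) :
    elog (jointU a0 b0) (ch a1 b1) ≤ elog (pm (jointU a0 b0)) (ch a1 b1) := by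
  have hlog : Real.log (a1 * b1) < Real.log ((1 - a1) * (1 - b1)) := by
    apply Real.log_lt_log (by nlinarith [ha1.1, hb1.1])
    nlinarith [ha1.1, ha1.2, hb1.1, hb1.2]
  have hla : Real.log (a1 * b1) = Real.log a1 + Real.log b1 :=
    Real.log_mul (ne_of_gt ha1.1) (ne_of_gt hb1.1)
  have hlb' : Real.log ((1 - a1) * (1 - b1)) = Real.log (1 - a1) + Real.log (1 - b1) :=
    Real.log_mul (by linarith [ha1.2]) (by linarith [hb1.2])
  have hc : (0:ℝ) ≤ (a0 + b0 - 1) / 4 := by linarith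
  have key := mul_le_mul_of_nonneg_left
    (by linarith : Real.log a1 + Real.log b1 ≤ Real.log (1 - a1) + Real.log (1 - b1)) hc
  simp only [elog, Fin.sum_univ_two, pm, jointU, ch]
  norm_num
  nlinarith [key]

/-- If `W0` is non-flipping-like (`a0 + b0 > 1`) and `W1` is flipping-like
(`a1 + b1 < 1`), then the mismatched mutual information
`I_MIS(U, W0, log W1) = inf { D(μ ‖ μ0^p) : μ^p = μ0^p, E_μ[log W1] ≥ E_{μ0}[log W1] }`
is zero. -/
theorem stmt_7 (a0 b0 a1 b1 : ℝ)
    (ha0 : a0 ∈ Set.Ioo (0:ℝ) 1) (hb0 : b0 ∈ Set.Ioo (0:ℝ) 1)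
    (ha1 : a1 ∈ Set.Ioo (0:ℝ) 1) (hb1 : b1 ∈ Set.Ioo (0:ℝ) 1)
    (h0 : 1 < a0 + b0) (h1 : a1 + b1 < 1) :
    sInf {r : ℝ | ∃ μ : Fin 2 → Fin 2 → ℝ, IsDist μ ∧
        (∀ x y, pm μ x y = pm (jointU a0 b0) x y) ∧
        elog (jointU a0 b0) (ch a1 b1) ≤ elog μ (ch a1 b1) ∧
        r = kl μ (pm (jointU a0 b0))} = 0 := by
  have hνpos : ∀ x y, 0 < pm (jointU a0 b0) x y := nu_pos a0 b0 ha0 hb0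
  have hlb : ∀ r ∈ {r : ℝ | ∃ μ : Fin 2 → Fin 2 → ℝ, IsDist μ ∧
        (∀ x y, pm μ x y = pm (jointU a0 b0) x y) ∧
        elog (jointU a0 b0) (ch a1 b1) ≤ elog μ (ch a1 b1) ∧
        r = kl μ (pm (jointU a0 b0))}, 0 ≤ r := by
    rintro r ⟨μ, ⟨hnn, hsum⟩, _, _, rfl⟩
    have key : ∑ x, ∑ y, (μ x y - pm (jointU a0 b0) x y) ≤ kl μ (pm (jointU a0 b0)) := by
      apply Finset.sum_le_sum
      intro x _
      apply Finset.sum_le_sum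
      intro y _
      exact gibbs_pt _ _ (hnn x y) (hνpos x y)
    have hz : ∑ x, ∑ y, (μ x y - pm (jointU a0 b0) x y) = 0 := by
      simp only [Finset.sum_sub_distrib]
      rw [hsum, nu_sum a0 b0]; ring
    linarith [key, hz]
  have hmem : (0:ℝ) ∈ {r : ℝ | ∃ μ : Fin 2 → Fin 2 → ℝ, IsDist μ ∧
        (∀ x y, pm μ x y = pm (jointU a0 b0) x y) ∧
        elog (jointU a0 b0) (ch a1 b1) ≤ elog μ (ch a1 b1) ∧
        r = kl μ (pm (jointU a0 b0))} := by
    refine ⟨pm (jointU a0 b0), ⟨fun x y => (hνpos x y).le, nu_sum a0 b0⟩,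
      nu_pm a0 b0, elog_ineq a0 b0 a1 b1 ha1 hb1 h0 h1, ?_⟩
    symm
    apply Finset.sum_eq_zero
    intro x _
    apply Finset.sum_eq_zero
    intro y _
    rw [div_self (hνpos x y).ne', Real.log_one, mul_zero]
  exact le_antisymm (csInf_le ⟨0, hlb⟩ hmem) (le_csInf ⟨0, hmem⟩ hlb)
end

section
/- For any binary channel W0 with strictly positive entries and any BSC W1 with crossover probability p ∈ (0,1/2), the generalized linear decoder induced by the two metrics log W1 and log W̃1 (where W̃1 is the reverse BSC) achieves the full matched rate: max over k∈{1,2} of inf{ D(μ ‖ μ0^p) : μ^p = μ0^p, E_μ[log W_k] ≥ max_j E_{μ0}[log W_j] } equals I(U, W0), where W_1 = W1 and W_2 = W̃1 and μ0 is the joint distribution of uniform input through W0. -/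
open Finset Real

/- ------------------- auxiliary lemmas ------------------- -/

lemma aux_mul_log_div_ge (u v : ℝ) (hu : 0 ≤ u) (hv : 0 < v) :
    u - v ≤ u * Real.log (u / v) := by
  rcases eq_or_lt_of_le hu with h | h
  · simp [← h]; linarith
  · have h1 := Real.log_le_sub_one_of_pos (show 0 < v/u by positivity)
    have h2 : Real.log (u / v) = - Real.log (v / u) := by
      rw [← Real.log_inv]; congr 1; field_simp
    rw [h2]
    have : v / u * u = v := by field_simp
    nlinarith

lemma aux_split_log (u v w : ℝ) (hu : 0 ≤ u) (hv : 0 < v) (hw : 0 < w) :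
    u * Real.log (u / w) = u * Real.log (u / v) + u * (Real.log v - Real.log w) := by
  rcases eq_or_lt_of_le hu with h | h
  · simp [← h]
  · rw [Real.log_div h.ne' hw.ne', Real.log_div h.ne' hv.ne']; ring

lemma aux_core_ge (r s t : ℝ) (hr0 : 0 < r) (hr1 : r < 1)
    (hs0 : 0 < s) (hs1 : s < 1/2) (hs2 : s < r) (hs3 : r - 1/2 < s)
    (ht0 : 0 ≤ t) (ht1 : t ≤ 1/2) (ht2 : t ≤ r) (ht3 : r - 1/2 ≤ t)
    (hts : s ≤ t) (hdet : r/2 ≤ s) :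
    s * Real.log (s / (r/2)) + (1/2 - s) * Real.log ((1/2 - s) / ((1-r)/2))
      + ((r - s) * Real.log ((r - s) / (r/2)) + (1/2 - r + s) * Real.log ((1/2 - r + s) / ((1-r)/2)))
    ≤ t * Real.log (t / (r/2)) + (1/2 - t) * Real.log ((1/2 - t) / ((1-r)/2))
      + ((r - t) * Real.log ((r - t) / (r/2)) + (1/2 - r + t) * Real.log ((1/2 - r + t) / ((1-r)/2))) := by
  have hw0 : 0 < r/2 := by linarith
  have hw1 : 0 < (1-r)/2 := by linarith
  have hv1 : 0 < 1/2 - s := by linarith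
  have hv2 : 0 < r - s := by linarith
  have hv3 : 0 < 1/2 - r + s := by linarith
  have hu1 : 0 ≤ 1/2 - t := by linarith
  have hu2 : 0 ≤ r - t := by linarith
  have hu3 : 0 ≤ 1/2 - r + t := by linarith
  rw [aux_split_log t s (r/2) ht0 hs0 hw0, aux_split_log (1/2-t) (1/2-s) ((1-r)/2) hu1 hv1 hw1,
      aux_split_log (r-t) (r-s) (r/2) hu2 hv2 hw0,
      aux_split_log (1/2-r+t) (1/2-r+s) ((1-r)/2) hu3 hv3 hw1,
      show s * Real.log (s/(r/2)) = s * (Real.log s - Real.log (r/2)) by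
        rw [Real.log_div hs0.ne' hw0.ne'],
      show (1/2 - s) * Real.log ((1/2-s)/((1-r)/2)) = (1/2-s) * (Real.log (1/2-s) - Real.log ((1-r)/2)) by
        rw [Real.log_div hv1.ne' hw1.ne'],
      show (r - s) * Real.log ((r-s)/(r/2)) = (r-s) * (Real.log (r-s) - Real.log (r/2)) by
        rw [Real.log_div hv2.ne' hw0.ne'],
      show (1/2 - r + s) * Real.log ((1/2-r+s)/((1-r)/2)) = (1/2-r+s) * (Real.log (1/2-r+s) - Real.log ((1-r)/2)) by
        rw [Real.log_div hv3.ne' hw1.ne']]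
  have g0 := aux_mul_log_div_ge t s ht0 hs0
  have g1 := aux_mul_log_div_ge (1/2-t) (1/2-s) hu1 hv1
  have g2 := aux_mul_log_div_ge (r-t) (r-s) hu2 hv2
  have g3 := aux_mul_log_div_ge (1/2-r+t) (1/2-r+s) hu3 hv3
  have hlog : Real.log ((1/2 - s) * (r - s)) ≤ Real.log (s * (1/2 - r + s)) :=
    Real.log_le_log (by positivity) (by nlinarith)
  rw [Real.log_mul hv1.ne' hv2.ne', Real.log_mul hs0.ne' hv3.ne'] at hlog
  have key : 0 ≤ (t - s) * ((Real.log s + Real.log (1/2 - r + s)) - (Real.log (1/2 - s) + Real.log (r - s))) :=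
    mul_nonneg (by linarith) (by linarith)
  linarith [g0, g1, g2, g3, key]

lemma aux_core_le (r s t : ℝ) (hr0 : 0 < r) (hr1 : r < 1)
    (hs0 : 0 < s) (hs1 : s < 1/2) (hs2 : s < r) (hs3 : r - 1/2 < s)
    (ht0 : 0 ≤ t) (ht1 : t ≤ 1/2) (ht2 : t ≤ r) (ht3 : r - 1/2 ≤ t)
    (hts : t ≤ s) (hdet : s ≤ r/2) :
    s * Real.log (s / (r/2)) + (1/2 - s) * Real.log ((1/2 - s) / ((1-r)/2))
      + ((r - s) * Real.log ((r - s) / (r/2)) + (1/2 - r + s) * Real.log ((1/2 - r + s) / ((1-r)/2)))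
    ≤ t * Real.log (t / (r/2)) + (1/2 - t) * Real.log ((1/2 - t) / ((1-r)/2))
      + ((r - t) * Real.log ((r - t) / (r/2)) + (1/2 - r + t) * Real.log ((1/2 - r + t) / ((1-r)/2))) := by
  have hw0 : 0 < r/2 := by linarith
  have hw1 : 0 < (1-r)/2 := by linarith
  have hv1 : 0 < 1/2 - s := by linarith
  have hv2 : 0 < r - s := by linarith
  have hv3 : 0 < 1/2 - r + s := by linarith
  have hu1 : 0 ≤ 1/2 - t := by linarith
  have hu2 : 0 ≤ r - t := by linarith
  have hu3 : 0 ≤ 1/2 - r + t := by linarith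
  rw [aux_split_log t s (r/2) ht0 hs0 hw0, aux_split_log (1/2-t) (1/2-s) ((1-r)/2) hu1 hv1 hw1,
      aux_split_log (r-t) (r-s) (r/2) hu2 hv2 hw0,
      aux_split_log (1/2-r+t) (1/2-r+s) ((1-r)/2) hu3 hv3 hw1,
      show s * Real.log (s/(r/2)) = s * (Real.log s - Real.log (r/2)) by
        rw [Real.log_div hs0.ne' hw0.ne'],
      show (1/2 - s) * Real.log ((1/2-s)/((1-r)/2)) = (1/2-s) * (Real.log (1/2-s) - Real.log ((1-r)/2)) by
        rw [Real.log_div hv1.ne' hw1.ne'],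
      show (r - s) * Real.log ((r-s)/(r/2)) = (r-s) * (Real.log (r-s) - Real.log (r/2)) by
        rw [Real.log_div hv2.ne' hw0.ne'],
      show (1/2 - r + s) * Real.log ((1/2-r+s)/((1-r)/2)) = (1/2-r+s) * (Real.log (1/2-r+s) - Real.log ((1-r)/2)) by
        rw [Real.log_div hv3.ne' hw1.ne']]
  have g0 := aux_mul_log_div_ge t s ht0 hs0
  have g1 := aux_mul_log_div_ge (1/2-t) (1/2-s) hu1 hv1
  have g2 := aux_mul_log_div_ge (r-t) (r-s) hu2 hv2
  have g3 := aux_mul_log_div_ge (1/2-r+t) (1/2-r+s) hu3 hv3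
  have hlog : Real.log (s * (1/2 - r + s)) ≤ Real.log ((1/2 - s) * (r - s)) :=
    Real.log_le_log (by positivity) (by nlinarith)
  rw [Real.log_mul hv1.ne' hv2.ne', Real.log_mul hs0.ne' hv3.ne'] at hlog
  have key : 0 ≤ (t - s) * ((Real.log s + Real.log (1/2 - r + s)) - (Real.log (1/2 - s) + Real.log (r - s))) :=
    mul_nonneg_of_nonpos_of_nonpos (by linarith) (by linarith)
  linarith [g0, g1, g2, g3, key]

lemma kl_expand (μ ν : Fin 2 → Fin 2 → ℝ) :
    kl μ ν = μ 0 0 * Real.log (μ 0 0 / ν 0 0) + μ 0 1 * Real.log (μ 0 1 / ν 0 1)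
      + (μ 1 0 * Real.log (μ 1 0 / ν 1 0) + μ 1 1 * Real.log (μ 1 1 / ν 1 1)) := by
  simp [kl, Fin.sum_univ_two]

lemma elog_expand (μ W : Fin 2 → Fin 2 → ℝ) :
    elog μ W = μ 0 0 * Real.log (W 0 0) + μ 0 1 * Real.log (W 0 1)
      + (μ 1 0 * Real.log (W 1 0) + μ 1 1 * Real.log (W 1 1)) := by
  simp [elog, Fin.sum_univ_two]

lemma pm_expand (μ : Fin 2 → Fin 2 → ℝ) (x y : Fin 2) :
    pm μ x y = (μ x 0 + μ x 1) * (μ 0 y + μ 1 y) := by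
  simp [pm, Fin.sum_univ_two]

lemma elog_W1 (p : ℝ) (μ : Fin 2 → Fin 2 → ℝ) :
    elog μ (ch (1-p) (1-p)) = (μ 0 0 + μ 1 1) * Real.log (1-p) + (μ 0 1 + μ 1 0) * Real.log p := by
  rw [elog_expand]; simp [ch]; ring_nf

lemma elog_W2 (p : ℝ) (μ : Fin 2 → Fin 2 → ℝ) :
    elog μ (ch p p) = (μ 0 0 + μ 1 1) * Real.log p + (μ 0 1 + μ 1 0) * Real.log (1-p) := by
  rw [elog_expand]; simp [ch]; ring_nf

set_option maxHeartbeats 2000000 in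
/-- The generalized linear decoder induced by the two metrics `log W1` and
`log W̃1` (a BSC with crossover `p ∈ (0, 1/2)` and its reverse BSC)
achieves the full matched rate `I(U, W0) = D(μ0 ‖ μ0^p)` on any binary channel
`W0` with strictly positive entries. -/
theorem stmt_9 (a0 b0 p : ℝ)
    (ha0 : a0 ∈ Set.Ioo (0:ℝ) 1) (hb0 : b0 ∈ Set.Ioo (0:ℝ) 1)
    (hp : 0 < p) (hp' : p < 1/2) :
    max
      (sInf {r : ℝ | ∃ μ : Fin 2 → Fin 2 → ℝ, IsDist μ ∧
        (∀ x y, pm μ x y = pm (jointU a0 b0) x y) ∧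
        max (elog (jointU a0 b0) (ch (1-p) (1-p))) (elog (jointU a0 b0) (ch p p))
          ≤ elog μ (ch (1-p) (1-p)) ∧
        r = kl μ (pm (jointU a0 b0))})
      (sInf {r : ℝ | ∃ μ : Fin 2 → Fin 2 → ℝ, IsDist μ ∧
        (∀ x y, pm μ x y = pm (jointU a0 b0) x y) ∧
        max (elog (jointU a0 b0) (ch (1-p) (1-p))) (elog (jointU a0 b0) (ch p p))
          ≤ elog μ (ch p p) ∧
        r = kl μ (pm (jointU a0 b0))})
    = kl (jointU a0 b0) (pm (jointU a0 b0)) := by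
  obtain ⟨ha1, ha2⟩ := ha0
  obtain ⟨hb1, hb2⟩ := hb0
  have hL : Real.log p < Real.log (1-p) := Real.log_lt_log hp (by linarith)
  have hr0a : (0:ℝ) < (1+a0-b0)/2 := by linarith
  have hr0b : (1+a0-b0)/2 < 1 := by linarith
  -- marginal of jointU
  have hπ0 : ∀ x : Fin 2, pm (jointU a0 b0) x 0 = (1+a0-b0)/2/2 := by
    intro x; fin_cases x <;> (rw [pm_expand] <;> simp [jointU, ch] <;> ring)
  have hπ1 : ∀ x : Fin 2, pm (jointU a0 b0) x 1 = (1-(1+a0-b0)/2)/2 := by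
    intro x; fin_cases x <;> (rw [pm_expand] <;> simp [jointU, ch] <;> ring)
  -- entries of jointU, in the two normal forms we need
  have e00 : jointU a0 b0 0 0 = a0/2 := by simp [jointU, ch]; ring
  have e01 : jointU a0 b0 0 1 = 1/2 - a0/2 := by simp [jointU, ch]; ring
  have e10 : jointU a0 b0 1 0 = (1+a0-b0)/2 - a0/2 := by simp [jointU, ch]; ring
  have e11 : jointU a0 b0 1 1 = 1/2 - (1+a0-b0)/2 + a0/2 := by simp [jointU, ch]; ring
  have f00 : jointU a0 b0 0 0 = (1+a0-b0)/2 - (1-b0)/2 := by simp [jointU, ch]; ring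
  have f01 : jointU a0 b0 0 1 = 1/2 - (1+a0-b0)/2 + (1-b0)/2 := by simp [jointU, ch]; ring
  have f10 : jointU a0 b0 1 0 = (1-b0)/2 := by simp [jointU, ch]; ring
  have f11 : jointU a0 b0 1 1 = 1/2 - (1-b0)/2 := by simp [jointU, ch]; ring
  have hEμ1 : elog (jointU a0 b0) (ch (1-p) (1-p))
      = (a0/2 + b0/2) * Real.log (1-p) + ((1-a0)/2 + (1-b0)/2) * Real.log p := by
    rw [elog_W1]; simp [jointU, ch]; ring
  have hEμ2 : elog (jointU a0 b0) (ch p p)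
      = (a0/2 + b0/2) * Real.log p + ((1-a0)/2 + (1-b0)/2) * Real.log (1-p) := by
    rw [elog_W2]; simp [jointU, ch]; ring
  -- the lower bound argument, common to both sets
  have main : ∀ μ : Fin 2 → Fin 2 → ℝ, IsDist μ →
      (∀ x y, pm μ x y = pm (jointU a0 b0) x y) →
      ((max (elog (jointU a0 b0) (ch (1-p) (1-p))) (elog (jointU a0 b0) (ch p p))
          ≤ elog μ (ch (1-p) (1-p))) ∨
       (max (elog (jointU a0 b0) (ch (1-p) (1-p))) (elog (jointU a0 b0) (ch p p))
          ≤ elog μ (ch p p))) →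
      kl (jointU a0 b0) (pm (jointU a0 b0)) ≤ kl μ (pm (jointU a0 b0)) := by
    intro μ ⟨hnn, hsum⟩ hpmeq hcase
    simp only [Fin.sum_univ_two] at hsum
    have h00 := hpmeq 0 0
    have h01 := hpmeq 0 1
    rw [pm_expand, hπ0 0] at h00
    rw [pm_expand, hπ1 0] at h01
    have hrow : μ 0 0 + μ 0 1 = 1/2 := by
      linear_combination h00 + h01 - (μ 0 0 + μ 0 1) * hsum
    have hcol : μ 0 0 + μ 1 0 = (1+a0-b0)/2 := by
      linear_combination 2*h00 - 2*(μ 0 0 + μ 1 0)*hrow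
    have hB : μ 0 1 = 1/2 - μ 0 0 := by linarith
    have hC : μ 1 0 = (1+a0-b0)/2 - μ 0 0 := by linarith
    have hD : μ 1 1 = 1/2 - (1+a0-b0)/2 + μ 0 0 := by linarith
    have ht0 : 0 ≤ μ 0 0 := hnn 0 0
    have ht1 : μ 0 0 ≤ 1/2 := by have := hnn 0 1; linarith
    have ht2 : μ 0 0 ≤ (1+a0-b0)/2 := by have := hnn 1 0; linarith
    have ht3 : (1+a0-b0)/2 - 1/2 ≤ μ 0 0 := by have := hnn 1 1; linarith
    rcases hcase with hcon | hcon
    · have h1 := le_trans (le_max_left _ _) hcon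
      have h2 := le_trans (le_max_right _ _) hcon
      rw [hEμ1, elog_W1, hB, hC, hD] at h1
      rw [hEμ2, elog_W1, hB, hC, hD] at h2
      have hq1 : a0/2 ≤ μ 0 0 := by nlinarith [h1, hL]
      have hq2 : (1-b0)/2 ≤ μ 0 0 := by nlinarith [h2, hL]
      rcases le_total ((1-b0)/2) (a0/2) with hba | hba
      · have hc := aux_core_ge ((1+a0-b0)/2) (a0/2) (μ 0 0) hr0a hr0b
          (by linarith) (by linarith) (by linarith) (by linarith)
          ht0 ht1 ht2 ht3 hq1 (by linarith)
        rw [kl_expand (jointU a0 b0), kl_expand μ, hπ0 0, hπ0 1, hπ1 0, hπ1 1,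
          e00, e01, e10, e11, hB, hC, hD]
        linarith [hc]
      · have hc := aux_core_ge ((1+a0-b0)/2) ((1-b0)/2) (μ 0 0) hr0a hr0b
          (by linarith) (by linarith) (by linarith) (by linarith)
          ht0 ht1 ht2 ht3 hq2 (by linarith)
        rw [kl_expand (jointU a0 b0), kl_expand μ, hπ0 0, hπ0 1, hπ1 0, hπ1 1,
          f00, f01, f10, f11, hB, hC, hD]
        linarith [hc]
    · have h1 := le_trans (le_max_left _ _) hcon
      have h2 := le_trans (le_max_right _ _) hcon
      rw [hEμ1, elog_W2, hB, hC, hD] at h1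
      rw [hEμ2, elog_W2, hB, hC, hD] at h2
      have hq1 : μ 0 0 ≤ a0/2 := by nlinarith [h2, hL]
      have hq2 : μ 0 0 ≤ (1-b0)/2 := by nlinarith [h1, hL]
      rcases le_total (a0/2) ((1-b0)/2) with hba | hba
      · have hc := aux_core_le ((1+a0-b0)/2) (a0/2) (μ 0 0) hr0a hr0b
          (by linarith) (by linarith) (by linarith) (by linarith)
          ht0 ht1 ht2 ht3 hq1 (by linarith)
        rw [kl_expand (jointU a0 b0), kl_expand μ, hπ0 0, hπ0 1, hπ1 0, hπ1 1,
          e00, e01, e10, e11, hB, hC, hD]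
        linarith [hc]
      · have hc := aux_core_le ((1+a0-b0)/2) ((1-b0)/2) (μ 0 0) hr0a hr0b
          (by linarith) (by linarith) (by linarith) (by linarith)
          ht0 ht1 ht2 ht3 hq2 (by linarith)
        rw [kl_expand (jointU a0 b0), kl_expand μ, hπ0 0, hπ0 1, hπ1 0, hπ1 1,
          f00, f01, f10, f11, hB, hC, hD]
        linarith [hc]
  -- the row-swapped distribution
  set ν : Fin 2 → Fin 2 → ℝ := fun x y =>
    if x = 0 then (if y = 0 then (1-b0)/2 else b0/2) else (if y = 0 then a0/2 else (1-a0)/2)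
    with hν
  have hν00 : ν 0 0 = (1-b0)/2 := by simp [hν]
  have hν01 : ν 0 1 = b0/2 := by simp [hν]
  have hν10 : ν 1 0 = a0/2 := by simp [hν]
  have hν11 : ν 1 1 = (1-a0)/2 := by simp [hν]
  have hνdist : IsDist ν := by
    constructor
    · intro x y; fin_cases x <;> fin_cases y <;> simp [hν] <;> linarith
    · simp [Fin.sum_univ_two, hν]; ring
  have hνpm : ∀ x y, pm ν x y = pm (jointU a0 b0) x y := by
    intro x y
    rw [pm_expand, pm_expand]
    fin_cases x <;> fin_cases y <;> simp [hν, jointU, ch] <;> ring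
  have hνkl : kl ν (pm (jointU a0 b0)) = kl (jointU a0 b0) (pm (jointU a0 b0)) := by
    rw [kl_expand ν, kl_expand (jointU a0 b0), hπ0 0, hπ0 1, hπ1 0, hπ1 1,
      hν00, hν01, hν10, hν11, e00, e01, e10, e11]
    ring_nf
  -- elog values
  have hEν1 : elog ν (ch (1-p) (1-p))
      = ((1-b0)/2 + (1-a0)/2) * Real.log (1-p) + (b0/2 + a0/2) * Real.log p := by
    rw [elog_W1, hν00, hν01, hν10, hν11]
  have hEν2 : elog ν (ch p p)
      = ((1-b0)/2 + (1-a0)/2) * Real.log p + (b0/2 + a0/2) * Real.log (1-p) := by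
    rw [elog_W2, hν00, hν01, hν10, hν11]
  -- first infimum
  have hA : sInf {r : ℝ | ∃ μ : Fin 2 → Fin 2 → ℝ, IsDist μ ∧
        (∀ x y, pm μ x y = pm (jointU a0 b0) x y) ∧
        max (elog (jointU a0 b0) (ch (1-p) (1-p))) (elog (jointU a0 b0) (ch p p))
          ≤ elog μ (ch (1-p) (1-p)) ∧
        r = kl μ (pm (jointU a0 b0))}
      = kl (jointU a0 b0) (pm (jointU a0 b0)) := by
    have hlb : ∀ x ∈ {r : ℝ | ∃ μ : Fin 2 → Fin 2 → ℝ, IsDist μ ∧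
        (∀ x y, pm μ x y = pm (jointU a0 b0) x y) ∧
        max (elog (jointU a0 b0) (ch (1-p) (1-p))) (elog (jointU a0 b0) (ch p p))
          ≤ elog μ (ch (1-p) (1-p)) ∧
        r = kl μ (pm (jointU a0 b0))},
        kl (jointU a0 b0) (pm (jointU a0 b0)) ≤ x := by
      rintro x ⟨μ, hdist, hpmeq, hcon, rfl⟩
      exact main μ hdist hpmeq (Or.inl hcon)
    have hmem : kl (jointU a0 b0) (pm (jointU a0 b0)) ∈ {r : ℝ | ∃ μ : Fin 2 → Fin 2 → ℝ, IsDist μ ∧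
        (∀ x y, pm μ x y = pm (jointU a0 b0) x y) ∧
        max (elog (jointU a0 b0) (ch (1-p) (1-p))) (elog (jointU a0 b0) (ch p p))
          ≤ elog μ (ch (1-p) (1-p)) ∧
        r = kl μ (pm (jointU a0 b0))} := by
      rcases le_total (a0 + b0) 1 with hab | hab
      · refine ⟨ν, hνdist, hνpm, ?_, hνkl.symm⟩
        rw [hEμ1, hEμ2, hEν1]
        refine max_le ?_ ?_ <;> nlinarith [hL]
      · refine ⟨jointU a0 b0, ?_, fun x y => rfl, ?_, rfl⟩
        · constructor
          · intro x y; fin_cases x <;> fin_cases y <;> simp [jointU, ch] <;> linarith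
          · simp [Fin.sum_univ_two, jointU, ch]; ring
        · rw [hEμ1, hEμ2]
          refine max_le le_rfl ?_
          nlinarith [hL]
    exact le_antisymm (csInf_le ⟨_, hlb⟩ hmem) (le_csInf ⟨_, hmem⟩ hlb)
  -- second infimum
  have hB : sInf {r : ℝ | ∃ μ : Fin 2 → Fin 2 → ℝ, IsDist μ ∧
        (∀ x y, pm μ x y = pm (jointU a0 b0) x y) ∧
        max (elog (jointU a0 b0) (ch (1-p) (1-p))) (elog (jointU a0 b0) (ch p p))
          ≤ elog μ (ch p p) ∧
        r = kl μ (pm (jointU a0 b0))}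
      = kl (jointU a0 b0) (pm (jointU a0 b0)) := by
    have hlb : ∀ x ∈ {r : ℝ | ∃ μ : Fin 2 → Fin 2 → ℝ, IsDist μ ∧
        (∀ x y, pm μ x y = pm (jointU a0 b0) x y) ∧
        max (elog (jointU a0 b0) (ch (1-p) (1-p))) (elog (jointU a0 b0) (ch p p))
          ≤ elog μ (ch p p) ∧
        r = kl μ (pm (jointU a0 b0))},
        kl (jointU a0 b0) (pm (jointU a0 b0)) ≤ x := by
      rintro x ⟨μ, hdist, hpmeq, hcon, rfl⟩
      exact main μ hdist hpmeq (Or.inr hcon)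
    have hmem : kl (jointU a0 b0) (pm (jointU a0 b0)) ∈ {r : ℝ | ∃ μ : Fin 2 → Fin 2 → ℝ, IsDist μ ∧
        (∀ x y, pm μ x y = pm (jointU a0 b0) x y) ∧
        max (elog (jointU a0 b0) (ch (1-p) (1-p))) (elog (jointU a0 b0) (ch p p))
          ≤ elog μ (ch p p) ∧
        r = kl μ (pm (jointU a0 b0))} := by
      rcases le_total (a0 + b0) 1 with hab | hab
      · refine ⟨jointU a0 b0, ?_, fun x y => rfl, ?_, rfl⟩
        · constructor
          · intro x y; fin_cases x <;> fin_cases y <;> simp [jointU, ch] <;> linarith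
          · simp [Fin.sum_univ_two, jointU, ch]; ring
        · rw [hEμ1, hEμ2]
          refine max_le ?_ le_rfl
          nlinarith [hL]
      · refine ⟨ν, hνdist, hνpm, ?_, hνkl.symm⟩
        rw [hEμ1, hEμ2, hEν2]
        refine max_le ?_ ?_ <;> nlinarith [hL]
    exact le_antisymm (csInf_le ⟨_, hlb⟩ hmem) (le_csInf ⟨_, hmem⟩ hlb)
  rw [hA, hB, max_self]
end

section
/- Assume a0 + b0 > 1 and all entries of W0 are strictly positive. For t ≥ t0 (where μ_{t0} = μ0 in the family μ_t(x,y) = μ0^p(x,y) + (−1)^{x+y} t), the KL divergence D(μ_t ‖ μ0^p) is monotonically nondecreasing in t; hence inf_{t ≥ t0} D(μ_t ‖ μ0^p) = D(μ0 ‖ μ0^p) = I(U, W0). -/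
open Finset Real

/-- The one-parameter family `μ_t(x,y) = μ0^p(x,y) + (−1)^{x+y} t` of measures
sharing the marginals of the uniform-input joint `μ0` of the channel `(a,b)`. -/
noncomputable def lineDist (a b t : ℝ) : Fin 2 → Fin 2 → ℝ := fun x y =>
  pm (jointU a b) x y + (if x = y then t else -t)

/-! Every `μ_t` has the marginals of `μ0`, so the cross term `∑ μ_t log μ0^p` does not depend on
`t` and `D(μ_t ‖ μ0^p)` is `∑ μ_t log μ_t` up to a constant. With `c, d` the two column masses of
`μ0^p`, that sum is `g_c(t) + g_d(t)` where `g_c(t) = (c+t) log (c+t) + (c-t) log (c-t)` has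
derivative `log ((c+t)/(c-t)) ≥ 0` for `t ≥ 0`. As `a0 + b0 > 1` makes `t0 > 0`, the divergence is
nondecreasing on `t ≥ t0`, and its infimum is its value at `t0`, where `μ_{t0} = μ0`. -/

noncomputable def pairMulLog (c t : ℝ) : ℝ :=
  (c + t) * log (c + t) + (c - t) * log (c - t)

lemma hasDerivAt_pairMulLog {c t : ℝ} (h₁ : 0 < c + t) (h₂ : 0 < c - t) :
    HasDerivAt (pairMulLog c) (log (c + t) - log (c - t)) t := by
  have hplus := (hasDerivAt_mul_log h₁.ne').comp t ((hasDerivAt_id t).const_add c)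
  have hminus := (hasDerivAt_mul_log h₂.ne').comp t ((hasDerivAt_id t).neg.const_add c)
  exact (hplus.add hminus).congr_deriv (by ring)

lemma monotoneOn_pairMulLog (c : ℝ) : MonotoneOn (pairMulLog c) (Set.Icc 0 c) := by
  apply monotoneOn_of_deriv_nonneg (convex_Icc 0 c)
  · exact (((continuous_const.add continuous_id).mul_log).add
      ((continuous_const.sub continuous_id).mul_log)).continuousOn
  · rw [interior_Icc]
    rintro t ⟨ht, htc⟩
    exact (hasDerivAt_pairMulLog (by linarith) (by linarith))
      |>.differentiableAt.differentiableWithinAt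
  · rw [interior_Icc]
    rintro t ⟨ht, htc⟩
    rw [(hasDerivAt_pairMulLog (by linarith) (by linarith)).deriv, sub_nonneg]
    exact log_le_log (by linarith) (by linarith)

lemma mul_log_div_of_nonneg {u v : ℝ} (hu : 0 ≤ u) (hv : 0 < v) :
    u * log (u / v) = u * log u - u * log v := by
  rcases hu.eq_or_lt with rfl | hu
  · simp
  · rw [log_div hu.ne' hv.ne']
    ring

section BinaryChannel

variable (a b : ℝ)

lemma pm_jointU_apply (x y : Fin 2) :
    pm (jointU a b) x y = if y = 0 then (a + 1 - b) / 4 else (1 - a + b) / 4 := by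
  fin_cases x <;> fin_cases y <;> simp [pm, jointU, ch, Fin.sum_univ_two] <;> ring

lemma jointU_zero_zero_sub_pm : jointU a b 0 0 - pm (jointU a b) 0 0 = (a + b - 1) / 4 := by
  rw [pm_jointU_apply]
  simp only [jointU, ch, Fin.isValue, ↓reduceIte]
  ring

lemma lineDist_nonneg_iff (t : ℝ) :
    (∀ x y, 0 ≤ lineDist a b t x y) ↔ |t| ≤ (a + 1 - b) / 4 ∧ |t| ≤ (1 - a + b) / 4 := by
  simp only [Fin.forall_fin_two, lineDist, pm_jointU_apply, abs_le, Fin.isValue, ↓reduceIte,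
    one_ne_zero, zero_ne_one, le_add_neg_iff_add_le, zero_add]
  constructor <;> intro h <;> refine ⟨⟨?_, ?_⟩, ?_, ?_⟩ <;> linarith [h.1.1, h.1.2, h.2.1, h.2.2]

lemma lineDist_eq_jointU : lineDist a b (jointU a b 0 0 - pm (jointU a b) 0 0) = jointU a b := by
  rw [jointU_zero_zero_sub_pm]
  funext x y
  fin_cases x <;> fin_cases y <;> simp [lineDist, pm_jointU_apply, jointU, ch] <;> ring

variable {a b}

lemma jointU_nonneg (ha : a ∈ Set.Icc 0 1) (hb : b ∈ Set.Icc 0 1) (x y : Fin 2) :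
    0 ≤ jointU a b x y := by
  obtain ⟨ha₀, ha₁⟩ := ha
  obtain ⟨hb₀, hb₁⟩ := hb
  fin_cases x <;> fin_cases y <;> simp [jointU, ch] <;> linarith

lemma kl_lineDist_pm_jointU {t : ℝ} (hc : 0 < (a + 1 - b) / 4) (hd : 0 < (1 - a + b) / 4)
    (ht : ∀ x y, 0 ≤ lineDist a b t x y) :
    kl (lineDist a b t) (pm (jointU a b)) =
      pairMulLog ((a + 1 - b) / 4) t + pairMulLog ((1 - a + b) / 4) t
        - (2 * ((a + 1 - b) / 4) * log ((a + 1 - b) / 4)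
          + 2 * ((1 - a + b) / 4) * log ((1 - a + b) / 4)) := by
  have hpm : ∀ x y, 0 < pm (jointU a b) x y := by
    intro x y
    rw [pm_jointU_apply]
    split_ifs <;> assumption
  rw [kl, Finset.sum_congr rfl fun x _ => Finset.sum_congr rfl fun y _ =>
    mul_log_div_of_nonneg (ht x y) (hpm x y)]
  simp only [Fin.sum_univ_two, lineDist, pm_jointU_apply, pairMulLog, Fin.isValue, ↓reduceIte,
    one_ne_zero, zero_ne_one, ← sub_eq_add_neg]
  ring

lemma monotoneOn_kl_lineDist (hc : 0 < (a + 1 - b) / 4) (hd : 0 < (1 - a + b) / 4) :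
    MonotoneOn (fun t => kl (lineDist a b t) (pm (jointU a b)))
      {t | 0 ≤ t ∧ ∀ x y, 0 ≤ lineDist a b t x y} := by
  rintro s ⟨hs₀, hs⟩ t ⟨ht₀, ht⟩ hst
  have hs' := (lineDist_nonneg_iff a b s).1 hs
  have ht' := (lineDist_nonneg_iff a b t).1 ht
  have hmono₁ := monotoneOn_pairMulLog ((a + 1 - b) / 4)
    ⟨hs₀, (le_abs_self s).trans hs'.1⟩ ⟨ht₀, (le_abs_self t).trans ht'.1⟩ hst
  have hmono₂ := monotoneOn_pairMulLog ((1 - a + b) / 4)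
    ⟨hs₀, (le_abs_self s).trans hs'.2⟩ ⟨ht₀, (le_abs_self t).trans ht'.2⟩ hst
  dsimp only
  rw [kl_lineDist_pm_jointU hc hd hs, kl_lineDist_pm_jointU hc hd ht]
  linarith

end BinaryChannel

/-- For `a0 + b0 > 1` and `t0 = μ0(0,0) − μ0^p(0,0)` (so `μ_{t0} = μ0`), the
divergence `t ↦ D(μ_t ‖ μ0^p)` is nondecreasing on `{t ≥ t0}` (within the
valid range), hence its infimum there is `D(μ0 ‖ μ0^p) = I(U, W0)`. -/
theorem stmt_19 (a0 b0 : ℝ)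
    (ha0 : a0 ∈ Set.Ioo (0:ℝ) 1) (hb0 : b0 ∈ Set.Ioo (0:ℝ) 1) (h : 1 < a0 + b0) :
    MonotoneOn (fun t => kl (lineDist a0 b0 t) (pm (jointU a0 b0)))
      {t : ℝ | jointU a0 b0 0 0 - pm (jointU a0 b0) 0 0 ≤ t ∧
        ∀ x y, 0 ≤ lineDist a0 b0 t x y} ∧
    sInf {r : ℝ | ∃ t : ℝ, jointU a0 b0 0 0 - pm (jointU a0 b0) 0 0 ≤ t ∧
        (∀ x y, 0 ≤ lineDist a0 b0 t x y) ∧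
        r = kl (lineDist a0 b0 t) (pm (jointU a0 b0))}
      = kl (jointU a0 b0) (pm (jointU a0 b0)) := by
  set t₀ := jointU a0 b0 0 0 - pm (jointU a0 b0) 0 0 with ht₀
  set S := {t : ℝ | t₀ ≤ t ∧ ∀ x y, 0 ≤ lineDist a0 b0 t x y}
  set f := fun t => kl (lineDist a0 b0 t) (pm (jointU a0 b0))
  have hmono : MonotoneOn f S := by
    rw [jointU_zero_zero_sub_pm] at ht₀
    refine (monotoneOn_kl_lineDist (by linarith [hb0.2]) (by linarith [ha0.2])).mono ?_
    exact fun t ht => ⟨by linarith [ht.1], ht.2⟩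
  have hleast : IsLeast S t₀ := by
    refine ⟨⟨le_rfl, ?_⟩, fun t ht => ht.1⟩
    rw [ht₀, lineDist_eq_jointU]
    exact jointU_nonneg (Set.Ioo_subset_Icc_self ha0) (Set.Ioo_subset_Icc_self hb0)
  have himage : {r | ∃ t, t₀ ≤ t ∧ (∀ x y, 0 ≤ lineDist a0 b0 t x y) ∧ r = f t} = f '' S := by
    ext r
    simp only [S, Set.mem_image, Set.mem_ofPred_eq, and_assoc, eq_comm]
  refine ⟨hmono, ?_⟩
  rw [himage, (hmono.map_isLeast hleast).csInf_eq]
  exact congrArg (kl · _) (lineDist_eq_jointU a0 b0)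
end
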